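/- Let m ≥ 1 and let γ_1, …, γ_m, γ̂_1, …, γ̂_m and φ be fixed positive real numbers. Define, for complex s, C_{m+1}(s) = 1/(φ·√s) using the principal complex square root, and C_i(s) = 1/(s·γ̂_i + 1/(γ_i + C_{i+1}(s))) for i = m, …, 1. Then on the slit plane ℂ \ (−∞, 0] = {s ∈ ℂ : Im s ≠ 0 or Re s > 0} no denominator in the recursion vanishes, so F̂^φ_m(s) = C_1(s) is well defined, and the function s ↦ F̂^φ_m(s) is complex differentiable (holomorphic) at every point of this slit plane; i.e., the scalar Kreĭn–Nudelman quadrature is analytic with branch cut only on the negative real semiaxis (Proposition 1, part 1, scalar case). -/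
import Mathlib


open Complex

/-- Tail values of the scalar Kreĭn–Nudelman continued fraction:
`knTail m γ γ̂ φ s k = C_{m+1-k}`, where `C_{m+1} = 1/(φ·√s)` (principal complex
square root) and `C_i = 1/(s·γ̂_i + 1/(γ_i + C_{i+1}))`. -/
noncomputable def knTail (m : ℕ) (γ γhat : ℕ → ℝ) (φ : ℝ) (s : ℂ) : ℕ → ℂ
  | 0 => 1 / ((φ : ℂ) * s ^ (1 / 2 : ℂ))
  | k + 1 =>
      1 / (s * (γhat (m - k) : ℂ) + 1 / ((γ (m - k) : ℂ) + knTail m γ γhat φ s k))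

/-- The scalar Kreĭn–Nudelman continued-fraction value `C_i`, `i = 1, …, m+1`. -/
noncomputable def knC (m : ℕ) (γ γhat : ℕ → ℝ) (φ : ℝ) (s : ℂ) (i : ℕ) : ℂ :=
  knTail m γ γhat φ s (m + 1 - i)

/-- Sign condition "opposite half-plane to `s` (or positive real)". -/
def knP (s c : ℂ) : Prop :=
  (0 < s.im → c.im < 0) ∧ (s.im < 0 → 0 < c.im) ∧ (s.im = 0 → c.im = 0 ∧ 0 < c.re)

/-- Sign condition "same half-plane as `s` (or positive real)". -/
def knQ (s c : ℂ) : Prop :=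
  (0 < s.im → 0 < c.im) ∧ (s.im < 0 → c.im < 0) ∧ (s.im = 0 → c.im = 0 ∧ 0 < c.re)

lemma knP_ne_zero {s c : ℂ} (h : knP s c) : c ≠ 0 := by
  intro h0
  rcases lt_trichotomy s.im 0 with hi | hi | hi
  · exact absurd (h.2.1 hi) (by simp [h0])
  · exact absurd (h.2.2 hi).2 (by simp [h0])
  · exact absurd (h.1 hi) (by simp [h0])

lemma knQ_ne_zero {s c : ℂ} (h : knQ s c) : c ≠ 0 := by
  intro h0
  rcases lt_trichotomy s.im 0 with hi | hi | hi
  · exact absurd (h.2.1 hi) (by simp [h0])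
  · exact absurd (h.2.2 hi).2 (by simp [h0])
  · exact absurd (h.1 hi) (by simp [h0])

lemma knP_one_div {s c : ℂ} (h : knQ s c) : knP s (1 / c) := by
  have hc : c ≠ 0 := knQ_ne_zero h
  have hns : 0 < Complex.normSq c := Complex.normSq_pos.2 hc
  refine ⟨fun hi => ?_, fun hi => ?_, fun hi => ?_⟩
  · have := h.1 hi
    simp only [one_div, Complex.inv_im]
    exact div_neg_of_neg_of_pos (by linarith) hns
  · have := h.2.1 hi
    simp only [one_div, Complex.inv_im]
    exact div_pos (by linarith) hns
  · obtain ⟨h1, h2⟩ := h.2.2 hi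
    simp only [one_div, Complex.inv_im, Complex.inv_re, h1, neg_zero, zero_div]
    exact ⟨trivial, div_pos h2 hns⟩

lemma knQ_one_div {s c : ℂ} (h : knP s c) : knQ s (1 / c) := by
  have hc : c ≠ 0 := knP_ne_zero h
  have hns : 0 < Complex.normSq c := Complex.normSq_pos.2 hc
  refine ⟨fun hi => ?_, fun hi => ?_, fun hi => ?_⟩
  · have := h.1 hi
    simp only [one_div, Complex.inv_im]
    exact div_pos (by linarith) hns
  · have := h.2.1 hi
    simp only [one_div, Complex.inv_im]
    exact div_neg_of_neg_of_pos (by linarith) hns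
  · obtain ⟨h1, h2⟩ := h.2.2 hi
    simp only [one_div, Complex.inv_im, Complex.inv_re, h1, neg_zero, zero_div]
    exact ⟨trivial, div_pos h2 hns⟩

lemma knP_add_real {s c : ℂ} {a : ℝ} (ha : 0 < a) (h : knP s c) : knP s ((a : ℂ) + c) := by
  refine ⟨fun hi => ?_, fun hi => ?_, fun hi => ?_⟩
  · simpa using h.1 hi
  · simpa using h.2.1 hi
  · obtain ⟨h1, h2⟩ := h.2.2 hi
    constructor
    · simp [h1]
    · simp only [Complex.add_re, Complex.ofReal_re]
      linarith

lemma knQ_smul {s : ℂ} (hs : s.im ≠ 0 ∨ 0 < s.re) {a : ℝ} (ha : 0 < a) :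
    knQ s (s * (a : ℂ)) := by
  refine ⟨fun hi => ?_, fun hi => ?_, fun hi => ?_⟩
  · simp only [Complex.mul_im, Complex.ofReal_re, Complex.ofReal_im, mul_zero, zero_add]
    positivity
  · simp only [Complex.mul_im, Complex.ofReal_re, Complex.ofReal_im, mul_zero, zero_add]
    exact mul_neg_of_neg_of_pos hi ha
  · have hre : 0 < s.re := by tauto
    constructor
    · simp [Complex.mul_im, hi]
    · simp only [Complex.mul_re, Complex.ofReal_re, Complex.ofReal_im, mul_zero, sub_zero]
      positivity

lemma knQ_add {s c d : ℂ} (hc : knQ s c) (hd : knQ s d) : knQ s (c + d) := by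
  refine ⟨fun hi => ?_, fun hi => ?_, fun hi => ?_⟩
  · have := hc.1 hi; have := hd.1 hi
    simp only [Complex.add_im]; linarith
  · have := hc.2.1 hi; have := hd.2.1 hi
    simp only [Complex.add_im]; linarith
  · obtain ⟨h1, h2⟩ := hc.2.2 hi
    obtain ⟨h3, h4⟩ := hd.2.2 hi
    constructor
    · simp [Complex.add_im, h1, h3]
    · simp only [Complex.add_re]; linarith

lemma knQ_sqrt {s : ℂ} (hs : s.im ≠ 0 ∨ 0 < s.re) {φ : ℝ} (hφ : 0 < φ) :
    knQ s ((φ : ℂ) * s ^ (1 / 2 : ℂ)) := by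
  have hs0 : s ≠ 0 := by
    intro h0
    rcases hs with h | h
    · exact h (by simp [h0])
    · simp [h0] at h
  have hpow : s ^ (1 / 2 : ℂ) = Complex.exp (Complex.log s * (1 / 2 : ℂ)) :=
    Complex.cpow_def_of_ne_zero hs0 _
  have h2 : ((1 / 2 : ℂ)).re = 1 / 2 ∧ ((1 / 2 : ℂ)).im = 0 := by
    constructor <;> norm_num
  have him : (Complex.log s * (1 / 2 : ℂ)).im = s.arg / 2 := by
    rw [Complex.mul_im, h2.1, h2.2, Complex.log_im]
    ring
  have hargpi : s.arg < Real.pi := by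
    rw [Complex.arg_lt_pi_iff]
    rcases hs with h | h
    · exact Or.inr h
    · exact Or.inl h.le
  have hargpi' : -Real.pi < s.arg := Complex.neg_pi_lt_arg s
  have hepos : 0 < Real.exp (Complex.log s * (1 / 2 : ℂ)).re := Real.exp_pos _
  have hw_im : (s ^ (1 / 2 : ℂ)).im =
      Real.exp (Complex.log s * (1 / 2 : ℂ)).re * Real.sin (s.arg / 2) := by
    rw [hpow, Complex.exp_im, him]
  have hw_re : (s ^ (1 / 2 : ℂ)).re =
      Real.exp (Complex.log s * (1 / 2 : ℂ)).re * Real.cos (s.arg / 2) := by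
    rw [hpow, Complex.exp_re, him]
  have pi_pos := Real.pi_pos
  refine ⟨fun hi => ?_, fun hi => ?_, fun hi => ?_⟩
  · -- 0 < s.im : arg > 0
    have harg : 0 < s.arg := by
      rcases (Complex.arg_nonneg_iff.2 hi.le).lt_or_eq with h | h
      · exact h
      · exact absurd (Complex.arg_eq_zero_iff.1 h.symm).2 (by linarith [hi])
    have hsin : 0 < Real.sin (s.arg / 2) :=
      Real.sin_pos_of_pos_of_lt_pi (by linarith) (by linarith)
    simp only [Complex.mul_im, Complex.ofReal_re, Complex.ofReal_im, mul_zero, zero_add,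
      zero_mul, add_zero, hw_im]
    positivity
  · -- s.im < 0 : arg < 0
    have harg : s.arg < 0 := Complex.arg_neg_iff.2 hi
    have hsin : Real.sin (s.arg / 2) < 0 :=
      Real.sin_neg_of_neg_of_neg_pi_lt (by linarith) (by linarith)
    simp only [Complex.mul_im, Complex.ofReal_re, Complex.ofReal_im, mul_zero, zero_add,
      zero_mul, add_zero, hw_im]
    exact mul_neg_of_pos_of_neg hφ (mul_neg_of_pos_of_neg hepos hsin)
  · -- s.im = 0 : arg = 0
    have hre : 0 < s.re := by tauto
    have harg : s.arg = 0 := Complex.arg_eq_zero_iff.2 ⟨hre.le, hi⟩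
    constructor
    · rw [Complex.mul_im, Complex.ofReal_re, Complex.ofReal_im, hw_im, harg]
      simp
    · have hcos : Real.cos (s.arg / 2) = 1 := by rw [harg]; norm_num
      simp only [Complex.mul_re, Complex.ofReal_re, Complex.ofReal_im, mul_zero, zero_mul,
        sub_zero, hw_re, hcos, mul_one]
      positivity

lemma knTail_good (m : ℕ) (γ γhat : ℕ → ℝ)
    (hγ : ∀ i, 1 ≤ i → i ≤ m → 0 < γ i)
    (hγhat : ∀ i, 1 ≤ i → i ≤ m → 0 < γhat i)
    (φ : ℝ) (hφ : 0 < φ) (s : ℂ) (hs : s.im ≠ 0 ∨ 0 < s.re) :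
    ∀ k, k ≤ m → knP s (knTail m γ γhat φ s k) ∧
      DifferentiableAt ℂ (fun z => knTail m γ γhat φ z k) s := by
  intro k
  induction k with
  | zero =>
    intro _
    have hQ := knQ_sqrt hs hφ
    constructor
    · simpa [knTail] using knP_one_div hQ
    · have hne : (φ : ℂ) * s ^ (1 / 2 : ℂ) ≠ 0 := knQ_ne_zero hQ
      have hslit : s ∈ Complex.slitPlane := Complex.mem_slitPlane_iff.2 hs.symm
      have hd : DifferentiableAt ℂ (fun z : ℂ => (φ : ℂ) * z ^ (1 / 2 : ℂ)) s :=
        (differentiableAt_const _).mul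
          ((differentiableAt_id.cpow (differentiableAt_const _) hslit))
      have : DifferentiableAt ℂ (fun z : ℂ => 1 / ((φ : ℂ) * z ^ (1 / 2 : ℂ))) s :=
        (differentiableAt_const _).div hd hne
      simpa [knTail] using this
  | succ k ih =>
    intro hk
    have hk' : k ≤ m := Nat.le_of_succ_le hk
    have hidx1 : 1 ≤ m - k := Nat.le_sub_of_add_le (by omega)
    have hidx2 : m - k ≤ m := Nat.sub_le _ _
    obtain ⟨hP, hD⟩ := ih hk'
    have hPc : knP s ((γ (m - k) : ℂ) + knTail m γ γhat φ s k) :=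
      knP_add_real (hγ _ hidx1 hidx2) hP
    have hQi : knQ s (1 / ((γ (m - k) : ℂ) + knTail m γ γhat φ s k)) := knQ_one_div hPc
    have hQs : knQ s (s * (γhat (m - k) : ℂ)) := knQ_smul hs (hγhat _ hidx1 hidx2)
    have hQsum := knQ_add hQs hQi
    constructor
    · simpa [knTail] using knP_one_div hQsum
    · have hne1 : (γ (m - k) : ℂ) + knTail m γ γhat φ s k ≠ 0 := knP_ne_zero hPc
      have hne2 : s * (γhat (m - k) : ℂ) +
          1 / ((γ (m - k) : ℂ) + knTail m γ γhat φ s k) ≠ 0 := knQ_ne_zero hQsum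
      have hd1 : DifferentiableAt ℂ
          (fun z : ℂ => (γ (m - k) : ℂ) + knTail m γ γhat φ z k) s :=
        (differentiableAt_const _).add hD
      have hd2 : DifferentiableAt ℂ
          (fun z : ℂ => 1 / ((γ (m - k) : ℂ) + knTail m γ γhat φ z k)) s :=
        (differentiableAt_const _).div hd1 hne1
      have hd3 : DifferentiableAt ℂ (fun z : ℂ => z * (γhat (m - k) : ℂ)) s :=
        differentiableAt_id.mul (differentiableAt_const _)
      have : DifferentiableAt ℂ (fun z : ℂ => 1 / (z * (γhat (m - k) : ℂ) +
          1 / ((γ (m - k) : ℂ) + knTail m γ γhat φ z k))) s :=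
        (differentiableAt_const _).div (hd3.add hd2) hne2
      simpa [knTail] using this

/-- **Analyticity of the scalar Kreĭn–Nudelman quadrature on the slit plane
(Proposition 1, part 1, scalar case).** For positive coefficients `γ_i, γ̂_i, φ`,
on `ℂ \ (−∞, 0] = {s : Im s ≠ 0 ∨ Re s > 0}` no denominator of the recursion
vanishes, so `F̂^φ_m(s) = C_1(s)` is well defined, and `s ↦ F̂^φ_m(s)` is
holomorphic at every point of the slit plane. -/
theorem knC_holomorphic_on_slit_plane
    (m : ℕ) (hm : 1 ≤ m) (γ γhat : ℕ → ℝ)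
    (hγ : ∀ i, 1 ≤ i → i ≤ m → 0 < γ i)
    (hγhat : ∀ i, 1 ≤ i → i ≤ m → 0 < γhat i)
    (φ : ℝ) (hφ : 0 < φ) :
    ∀ s : ℂ, (s.im ≠ 0 ∨ 0 < s.re) →
      ((φ : ℂ) * s ^ (1 / 2 : ℂ) ≠ 0 ∧
        (∀ i, 1 ≤ i → i ≤ m →
          (γ i : ℂ) + knC m γ γhat φ s (i + 1) ≠ 0 ∧
          s * (γhat i : ℂ) + 1 / ((γ i : ℂ) + knC m γ γhat φ s (i + 1)) ≠ 0)) ∧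
      DifferentiableAt ℂ (fun z : ℂ => knC m γ γhat φ z 1) s := by
  intro s hs
  have key := knTail_good m γ γhat hγ hγhat φ hφ s hs
  refine ⟨⟨knQ_ne_zero (knQ_sqrt hs hφ), fun i hi1 hi2 => ?_⟩, ?_⟩
  · have hC : knC m γ γhat φ s (i + 1) = knTail m γ γhat φ s (m - i) := by
      simp [knC, Nat.succ_sub_succ]
    have hP := (key (m - i) (Nat.sub_le _ _)).1
    rw [hC]
    have hPc : knP s ((γ i : ℂ) + knTail m γ γhat φ s (m - i)) :=
      knP_add_real (hγ i hi1 hi2) hP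
    refine ⟨knP_ne_zero hPc, ?_⟩
    exact knQ_ne_zero (knQ_add (knQ_smul hs (hγhat i hi1 hi2)) (knQ_one_div hPc))
  · have hfun : (fun z : ℂ => knC m γ γhat φ z 1) =
        fun z : ℂ => knTail m γ γhat φ z m := by
      funext z
      simp [knC]
    rw [hfun]
    exact (key m le_rfl).2
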